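/- Suppose F is a weighted constraint language over a finite domain D all of whose weight functions take values in [0,1]∩ℚ, and let Φ = ν(F). If F is weakly log-supermodular, then Φ is weakly submodular. -/

import Mathlib

open scoped NNRat ENNReal

/-- A cost function of some arity over domain `D`, taking values in `ℝ≥0 ∪ {∞}`. -/
abbrev CFun (D : Type) : Type := Σ k : ℕ, (Fin k → D) → ℝ≥0∞

/-- The binary crisp equality cost function. -/
noncomputable def eqC (D : Type) [DecidableEq D] : (Fin 2 → D) → ℝ≥0∞ :=
  fun x => if x 0 = x 1 then 0 else ⊤

/-- `f` is definable by a psm-formula over `Φ ∪ {eq}`: a minimisation over `k`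
bound variables of a sum of `m` atomic formulas. -/
def InVClone {D : Type} [Fintype D] [DecidableEq D] (Φ : Set (CFun D)) {n : ℕ}
    (f : (Fin n → D) → ℝ≥0∞) : Prop :=
  ∃ (k m : ℕ) (ar : Fin m → ℕ) (g : ∀ j : Fin m, (Fin (ar j) → D) → ℝ≥0∞)
    (sc : ∀ j : Fin m, Fin (ar j) → Fin (n + k)),
    (∀ j : Fin m, (⟨ar j, g j⟩ : CFun D) ∈ Φ ∨ (⟨ar j, g j⟩ : CFun D) = ⟨2, eqC D⟩) ∧
    ∀ x : Fin n → D, f x = ⨅ y : Fin k → D, ∑ j : Fin m, g j (fun i => Fin.append x y (sc j i))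

/-- Weak submodularity of a valued constraint language. -/
def WeaklySubmodular {D : Type} [Fintype D] [DecidableEq D] (Φ : Set (CFun D)) : Prop :=
  ∀ f : (Fin 2 → D) → ℝ≥0∞, InVClone Φ f → ∀ a b : D,
    f ![a, a] + f ![b, b] ≤ f ![a, b] + f ![b, a] ∨ (f ![a, a] = ⊤ ∧ f ![b, b] = ⊤)

/-- A weight function of some arity over domain `D`, taking values in `ℚ≥0`. -/
abbrev WFun (D : Type) : Type := Σ k : ℕ, (Fin k → D) → ℚ≥0

/-- The binary equality weight function. -/
def EQw (D : Type) [DecidableEq D] : (Fin 2 → D) → ℚ≥0 :=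
  fun x => if x 0 = x 1 then 1 else 0

/-- `F` is definable by a pps-formula over `𝓕 ∪ {EQ}`: a sum over `k` bound
variables of a product of `m` atomic formulas. -/
def InFClone {D : Type} [Fintype D] [DecidableEq D] (𝓕 : Set (WFun D)) {n : ℕ}
    (F : (Fin n → D) → ℚ≥0) : Prop :=
  ∃ (k m : ℕ) (ar : Fin m → ℕ) (G : ∀ j : Fin m, (Fin (ar j) → D) → ℚ≥0)
    (sc : ∀ j : Fin m, Fin (ar j) → Fin (n + k)),
    (∀ j : Fin m, (⟨ar j, G j⟩ : WFun D) ∈ 𝓕 ∨ (⟨ar j, G j⟩ : WFun D) = ⟨2, EQw D⟩) ∧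
    ∀ x : Fin n → D, F x = ∑ y : Fin k → D, ∏ j : Fin m, G j (fun i => Fin.append x y (sc j i))

/-- Weak log-supermodularity of a weighted constraint language. -/
def WeaklyLogSupermodular {D : Type} [Fintype D] [DecidableEq D] (𝓕 : Set (WFun D)) : Prop :=
  ∀ F : (Fin 2 → D) → ℚ≥0, InFClone 𝓕 F → ∀ a b : D,
    F ![a, b] * F ![b, a] ≤ F ![a, a] * F ![b, b] ∨ (F ![a, a] = 0 ∧ F ![b, b] = 0)

/-- The cost function `ν(F)` associated with a `[0,1]`-valued weight function `F`:
`ν(F)(x) = -ln F(x)` if `F(x) > 0`, and `∞` if `F(x) = 0`. -/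
noncomputable def nuF {D : Type} {k : ℕ} (F : (Fin k → D) → ℚ≥0) : (Fin k → D) → ℝ≥0∞ :=
  fun x => if F x = 0 then ⊤ else ENNReal.ofReal (-Real.log ((F x : ℚ) : ℝ))

/-- The valued constraint language `ν(𝓕)`. -/
def nuSet {D : Type} (𝓕 : Set (WFun D)) : Set (CFun D) :=
  {g | ∃ F ∈ 𝓕, g = ⟨F.1, nuF F.2⟩}

/-!
The map `ν` sends products of `[0,1]`-valued weights to sums and, being antitone, maxima to
minima. Hence every binary `f` in the valued clone of `ν(𝓕)` is `ν ∘ M`, where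
`M x = max_y ∏_j G_j(x, y)` for atoms `G_j` of `𝓕 ∪ {EQ}`. The maximum is a tropical limit of the
power sums `S_p x = ∑_y (∏_j G_j(x, y))^p`, which lie in `⟨𝓕⟩` (repeat every atom `p` times)
and satisfy `M^p ≤ S_p ≤ |D|^k M^p`. So log-supermodularity of every `S_p` gives that of `M` up to
a constant factor, which disappears after taking `p`-th roots and letting `p → ∞`; `ν` then
turns it into submodularity of `f`.
-/

open Finset

section PowerSums

variable {R : Type*} {ι : Type*} [Fintype ι] [Nonempty ι]

theorem sup'_pow_le_sum_pow [CommSemiring R] [LinearOrder R] [IsOrderedRing R]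
    [CanonicallyOrderedAdd R] (u : ι → R) (p : ℕ) :
    univ.sup' univ_nonempty u ^ p ≤ ∑ i, u i ^ p := by
  obtain ⟨i, -, hi⟩ := exists_mem_eq_sup' univ_nonempty u
  rw [hi]
  exact single_le_sum (f := fun i => u i ^ p) (fun _ _ => zero_le) (mem_univ i)

theorem sum_pow_le_card_mul_sup'_pow [CommSemiring R] [LinearOrder R] [IsOrderedRing R]
    [CanonicallyOrderedAdd R] (u : ι → R) (p : ℕ) :
    ∑ i, u i ^ p ≤ Fintype.card ι * univ.sup' univ_nonempty u ^ p := by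
  rw [← nsmul_eq_mul, ← card_univ]
  exact sum_le_card_nsmul _ _ _ fun i _ => pow_le_pow_left₀ (zero_le) (le_sup' u (mem_univ i)) p

variable [Semifield R] [LinearOrder R] [IsStrictOrderedRing R] [CanonicallyOrderedAdd R]

theorem le_of_forall_pow_le_mul_pow [Archimedean R] {u v C : R}
    (h : ∀ p : ℕ, u ^ p ≤ C * v ^ p) : u ≤ v := by
  by_contra! hvu
  rcases eq_or_ne v 0 with rfl | hv
  · simpa [hvu.ne'] using h 1
  have hv' : 0 < v := pos_iff_ne_zero.mpr hv
  obtain ⟨p, hp⟩ := pow_unbounded_of_one_lt C ((one_lt_div hv').mpr hvu)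
  refine hp.not_ge ?_
  rw [div_pow, div_le_iff₀ (pow_pos hv' p)]
  exact h p

theorem sup'_mul_sup'_le_of_sum_pow [Archimedean R] (u v w z : ι → R)
    (h : ∀ p : ℕ, (∑ i, u i ^ p) * (∑ i, v i ^ p) ≤ (∑ i, w i ^ p) * (∑ i, z i ^ p)) :
    univ.sup' univ_nonempty u * univ.sup' univ_nonempty v ≤
      univ.sup' univ_nonempty w * univ.sup' univ_nonempty z := by
  refine le_of_forall_pow_le_mul_pow (C := (Fintype.card ι : R) ^ 2) fun p => ?_
  calc (univ.sup' univ_nonempty u * univ.sup' univ_nonempty v) ^ p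
      = univ.sup' univ_nonempty u ^ p * univ.sup' univ_nonempty v ^ p := mul_pow _ _ _
    _ ≤ (∑ i, u i ^ p) * (∑ i, v i ^ p) :=
        mul_le_mul' (sup'_pow_le_sum_pow u p) (sup'_pow_le_sum_pow v p)
    _ ≤ (∑ i, w i ^ p) * (∑ i, z i ^ p) := h p
    _ ≤ (Fintype.card ι * univ.sup' univ_nonempty w ^ p) *
          (Fintype.card ι * univ.sup' univ_nonempty z ^ p) :=
        mul_le_mul' (sum_pow_le_card_mul_sup'_pow w p) (sum_pow_le_card_mul_sup'_pow z p)
    _ = (Fintype.card ι : R) ^ 2 *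
          (univ.sup' univ_nonempty w * univ.sup' univ_nonempty z) ^ p := by ring

theorem sup'_mul_sup'_le_or_of_sum_pow [Archimedean R] (u v w z : ι → R)
    (h : ∀ p : ℕ, (∑ i, u i ^ p) * (∑ i, v i ^ p) ≤ (∑ i, w i ^ p) * (∑ i, z i ^ p) ∨
      ((∑ i, w i ^ p) = 0 ∧ (∑ i, z i ^ p) = 0)) :
    univ.sup' univ_nonempty u * univ.sup' univ_nonempty v ≤
        univ.sup' univ_nonempty w * univ.sup' univ_nonempty z ∨
      (univ.sup' univ_nonempty w = 0 ∧ univ.sup' univ_nonempty z = 0) := by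
  by_cases h0 : univ.sup' univ_nonempty w = 0 ∧ univ.sup' univ_nonempty z = 0
  · exact .inr h0
  refine .inl (sup'_mul_sup'_le_of_sum_pow u v w z fun p => (h p).resolve_right ?_)
  rintro ⟨hw, hz⟩
  have hw' := sup'_pow_le_sum_pow w p
  have hz' := sup'_pow_le_sum_pow z p
  rw [hw, nonpos_iff_eq_zero] at hw'
  rw [hz, nonpos_iff_eq_zero] at hz'
  exact h0 ⟨eq_zero_of_pow_eq_zero hw', eq_zero_of_pow_eq_zero hz'⟩

end PowerSums

noncomputable def nuQ (r : ℚ≥0) : ℝ≥0∞ :=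
  if r = 0 then ⊤ else ENNReal.ofReal (-Real.log ((r : ℚ) : ℝ))

theorem nuF_apply {D : Type} {k : ℕ} (F : (Fin k → D) → ℚ≥0) (x : Fin k → D) :
    nuF F x = nuQ (F x) := rfl

@[simp] theorem nuQ_zero : nuQ 0 = ⊤ := by simp [nuQ]

@[simp] theorem nuQ_one : nuQ 1 = 0 := by simp [nuQ]

theorem nuQ_antitone : Antitone nuQ := by
  intro r s hrs
  rcases eq_or_ne r 0 with rfl | hr
  · simp
  have hs : s ≠ 0 := (pos_iff_ne_zero.mpr hr |>.trans_le hrs).ne'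
  have hr' : (0 : ℝ) < ((r : ℚ) : ℝ) := by exact_mod_cast pos_iff_ne_zero.mpr hr
  have hrs' : ((r : ℚ) : ℝ) ≤ ((s : ℚ) : ℝ) := by exact_mod_cast hrs
  simp only [nuQ, if_neg hr, if_neg hs]
  exact ENNReal.ofReal_le_ofReal (neg_le_neg (Real.log_le_log hr' hrs'))

theorem nuQ_mul {r s : ℚ≥0} (hr : r ≤ 1) (hs : s ≤ 1) : nuQ (r * s) = nuQ r + nuQ s := by
  rcases eq_or_ne r 0 with rfl | hr0
  · simp
  rcases eq_or_ne s 0 with rfl | hs0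
  · simp
  have hr' : (0 : ℝ) < ((r : ℚ) : ℝ) := by exact_mod_cast pos_iff_ne_zero.mpr hr0
  have hs' : (0 : ℝ) < ((s : ℚ) : ℝ) := by exact_mod_cast pos_iff_ne_zero.mpr hs0
  have hlogr : Real.log ((r : ℚ) : ℝ) ≤ 0 := Real.log_nonpos hr'.le (by exact_mod_cast hr)
  have hlogs : Real.log ((s : ℚ) : ℝ) ≤ 0 := Real.log_nonpos hs'.le (by exact_mod_cast hs)
  simp only [nuQ, if_neg hr0, if_neg hs0, if_neg (mul_ne_zero hr0 hs0), NNRat.cast_mul,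
    Rat.cast_mul, Real.log_mul hr'.ne' hs'.ne', neg_add]
  exact ENNReal.ofReal_add (neg_nonneg.mpr hlogr) (neg_nonneg.mpr hlogs)

theorem nuQ_prod {ι : Type*} (s : Finset ι) (G : ι → ℚ≥0) (hG : ∀ i ∈ s, G i ≤ 1) :
    nuQ (∏ i ∈ s, G i) = ∑ i ∈ s, nuQ (G i) := by
  induction s using Finset.cons_induction with
  | empty => simp
  | cons a s ha ih =>
    have hG' : ∀ i ∈ s, G i ≤ 1 := fun i hi => hG i (mem_cons_of_mem hi)
    rw [prod_cons, sum_cons, nuQ_mul (hG a (mem_cons_self a s)) (prod_le_one' hG'), ih hG']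

theorem iInf_nuQ {ι : Type*} [Fintype ι] [Nonempty ι] (u : ι → ℚ≥0) :
    ⨅ i, nuQ (u i) = nuQ (univ.sup' univ_nonempty u) := by
  obtain ⟨i, -, hi⟩ := exists_mem_eq_sup' univ_nonempty u
  refine le_antisymm (hi ▸ iInf_le _ i) (le_iInf fun j => nuQ_antitone (le_sup' u (mem_univ j)))

theorem nuQ_add_nuQ_le_of_mul_le {r s t w : ℚ≥0} (hr : r ≤ 1) (hs : s ≤ 1) (ht : t ≤ 1)
    (hw : w ≤ 1) (h : r * s ≤ t * w) : nuQ t + nuQ w ≤ nuQ r + nuQ s := by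
  rw [← nuQ_mul ht hw, ← nuQ_mul hr hs]
  exact nuQ_antitone h

section Clones

variable {D : Type} [DecidableEq D]

theorem nuF_EQw : nuF (EQw D) = eqC D := by
  funext x
  by_cases hx : x 0 = x 1 <;> simp [nuF, EQw, eqC, hx]

theorem EQw_le_one (x : Fin 2 → D) : EQw D x ≤ 1 := by
  unfold EQw
  split_ifs <;> simp

theorem exists_weight_of_mem_nuSet_or_eq {𝓕 : Set (WFun D)} (hval : ∀ F ∈ 𝓕, ∀ x, F.2 x ≤ 1)
    {n : ℕ} {g : (Fin n → D) → ℝ≥0∞}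
    (hg : (⟨n, g⟩ : CFun D) ∈ nuSet 𝓕 ∨ (⟨n, g⟩ : CFun D) = ⟨2, eqC D⟩) :
    ∃ G : (Fin n → D) → ℚ≥0, g = nuF G ∧
      ((⟨n, G⟩ : WFun D) ∈ 𝓕 ∨ (⟨n, G⟩ : WFun D) = ⟨2, EQw D⟩) ∧ ∀ x, G x ≤ 1 := by
  rcases hg with ⟨⟨n', G⟩, hG, hgG⟩ | hg
  · obtain ⟨rfl, hgG⟩ := Sigma.mk.inj_iff.mp hgG
    exact ⟨G, eq_of_heq hgG, .inl hG, hval _ hG⟩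
  · obtain ⟨rfl, hg⟩ := Sigma.mk.inj_iff.mp hg
    exact ⟨EQw D, (eq_of_heq hg).trans nuF_EQw.symm, .inr rfl, EQw_le_one⟩

variable [Fintype D]

theorem InVClone.exists_eq_iInf_nuQ_prod {𝓕 : Set (WFun D)} (hval : ∀ F ∈ 𝓕, ∀ x, F.2 x ≤ 1)
    {n : ℕ} {f : (Fin n → D) → ℝ≥0∞} (hf : InVClone (nuSet 𝓕) f) :
    ∃ (k m : ℕ) (ar : Fin m → ℕ) (G : ∀ j : Fin m, (Fin (ar j) → D) → ℚ≥0)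
      (sc : ∀ j : Fin m, Fin (ar j) → Fin (n + k)),
      (∀ j, (⟨ar j, G j⟩ : WFun D) ∈ 𝓕 ∨ (⟨ar j, G j⟩ : WFun D) = ⟨2, EQw D⟩) ∧
      (∀ j x, G j x ≤ 1) ∧
      ∀ x, f x = ⨅ y : Fin k → D, nuQ (∏ j, G j fun i => Fin.append x y (sc j i)) := by
  obtain ⟨k, m, ar, g, sc, hg, hf⟩ := hf
  choose G hgG hG hG1 using fun j => exists_weight_of_mem_nuSet_or_eq hval (hg j)
  refine ⟨k, m, ar, G, sc, hG, hG1, fun x => ?_⟩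
  simp only [hf x, hgG, nuF_apply, nuQ_prod _ _ fun j _ => hG1 j _]

theorem inFClone_sum_prod_pow {𝓕 : Set (WFun D)} {n k m : ℕ} {ar : Fin m → ℕ}
    {G : ∀ j : Fin m, (Fin (ar j) → D) → ℚ≥0} {sc : ∀ j : Fin m, Fin (ar j) → Fin (n + k)}
    (hG : ∀ j, (⟨ar j, G j⟩ : WFun D) ∈ 𝓕 ∨ (⟨ar j, G j⟩ : WFun D) = ⟨2, EQw D⟩) (p : ℕ) :
    InFClone 𝓕 fun x : Fin n → D =>
      ∑ y : Fin k → D, (∏ j, G j fun i => Fin.append x y (sc j i)) ^ p := by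
  refine ⟨k, m * p, fun l => ar (finProdFinEquiv.symm l).1, fun l => G (finProdFinEquiv.symm l).1,
    fun l => sc (finProdFinEquiv.symm l).1, fun l => hG _, fun x => sum_congr rfl fun y _ => ?_⟩
  rw [Equiv.prod_comp finProdFinEquiv.symm
    (fun l : Fin m × Fin p => G l.1 fun i => Fin.append x y (sc l.1 i)),
    Fintype.prod_prod_type]
  simp [prod_pow]

end Clones

theorem weaklySubmodular_of_weaklyLogSupermodular_general
    {D : Type} [Fintype D] [DecidableEq D]
    (𝓕 : Set (WFun D)) (hval : ∀ F ∈ 𝓕, ∀ x, F.2 x ≤ 1)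
    (hwlsm : WeaklyLogSupermodular 𝓕) :
    WeaklySubmodular (nuSet 𝓕) := by
  intro f hf a b
  obtain ⟨k, m, ar, G, sc, hG, hG1, hf⟩ := hf.exists_eq_iInf_nuQ_prod hval
  have : Nonempty D := ⟨a⟩
  set P : (Fin 2 → D) → (Fin k → D) → ℚ≥0 := fun x y => ∏ j, G j fun i => Fin.append x y (sc j i)
  set M : (Fin 2 → D) → ℚ≥0 := fun x => univ.sup' univ_nonempty (P x)
  have hfM : ∀ x, f x = nuQ (M x) := fun x => (hf x).trans (iInf_nuQ (P x))
  have hM1 : ∀ x, M x ≤ 1 := fun x => sup'_le _ _ fun y _ => prod_le_one' fun j _ => hG1 j _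
  rcases sup'_mul_sup'_le_or_of_sum_pow (P ![a, b]) (P ![b, a]) (P ![a, a]) (P ![b, b])
    fun p => hwlsm _ (inFClone_sum_prod_pow hG p) a b with hle | ⟨haa, hbb⟩
  · simp only [hfM]
    exact .inl (nuQ_add_nuQ_le_of_mul_le (hM1 _) (hM1 _) (hM1 _) (hM1 _) hle)
  · simp only [hfM]
    exact .inr ⟨(congrArg nuQ haa).trans nuQ_zero, (congrArg nuQ hbb).trans nuQ_zero⟩

/-- If all weight functions of `𝓕` take values in `[0,1] ∩ ℚ`
and `𝓕` is weakly log-supermodular, then `ν(𝓕)` is weakly submodular. -/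
theorem weaklySubmodular_of_weaklyLogSupermodular
    {D : Type} [Fintype D] [DecidableEq D] (hD : 2 ≤ Fintype.card D)
    (𝓕 : Set (WFun D)) (hval : ∀ F ∈ 𝓕, ∀ x, F.2 x ≤ 1)
    (hwlsm : WeaklyLogSupermodular 𝓕) :
    WeaklySubmodular (nuSet 𝓕) :=
  weaklySubmodular_of_weaklyLogSupermodular_general 𝓕 hval hwlsm
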